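/- (Theorem 3) Let φ_B(s,v) = B(s) × B*(s) + v·B(s) be the ruled surface associated to the dual binormal indicatrix, where B* = β_B × B and N* = β_N × N, and suppose κ*(s) ≠ 0 and τ(s) ≠ 0 for all s. Then the Gaussian curvature K_B and the mean curvature H_B of φ_B vanish at every regular point (s,v) if and only if κ ≡ 0 and τ* ≡ 0. -/

import Mathlib

open Matrix

noncomputable section

/-- Cross product on ℝ³ (as `Fin 3 → ℝ`). -/
def cross3 (a b : Fin 3 → ℝ) : Fin 3 → ℝ := crossProduct a b

/-- Euclidean norm on ℝ³ (as `Fin 3 → ℝ`). -/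
noncomputable def enorm3 (a : Fin 3 → ℝ) : ℝ := Real.sqrt (a ⬝ᵥ a)

/-- A dual Frenet apparatus: smooth maps `T, N, B, T*, N*, B* : ℝ → ℝ³` and smooth
functions `κ, τ, κ*, τ* : ℝ → ℝ` such that `{T, N, B}` is orthonormal with `B = T × N`,
the real Frenet equations hold, and the dual-part Frenet equations hold. -/
structure DualFrenetApparatus where
  T : ℝ → Fin 3 → ℝ
  N : ℝ → Fin 3 → ℝ
  B : ℝ → Fin 3 → ℝ
  Tstar : ℝ → Fin 3 → ℝ
  Nstar : ℝ → Fin 3 → ℝ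
  Bstar : ℝ → Fin 3 → ℝ
  kappa : ℝ → ℝ
  tau : ℝ → ℝ
  kappaStar : ℝ → ℝ
  tauStar : ℝ → ℝ
  smooth_T : ContDiff ℝ (⊤ : ℕ∞) T
  smooth_N : ContDiff ℝ (⊤ : ℕ∞) N
  smooth_B : ContDiff ℝ (⊤ : ℕ∞) B
  smooth_Tstar : ContDiff ℝ (⊤ : ℕ∞) Tstar
  smooth_Nstar : ContDiff ℝ (⊤ : ℕ∞) Nstar
  smooth_Bstar : ContDiff ℝ (⊤ : ℕ∞) Bstar
  smooth_kappa : ContDiff ℝ (⊤ : ℕ∞) kappa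
  smooth_tau : ContDiff ℝ (⊤ : ℕ∞) tau
  smooth_kappaStar : ContDiff ℝ (⊤ : ℕ∞) kappaStar
  smooth_tauStar : ContDiff ℝ (⊤ : ℕ∞) tauStar
  unit_T : ∀ s, T s ⬝ᵥ T s = 1
  unit_N : ∀ s, N s ⬝ᵥ N s = 1
  unit_B : ∀ s, B s ⬝ᵥ B s = 1
  orth_TN : ∀ s, T s ⬝ᵥ N s = 0
  orth_TB : ∀ s, T s ⬝ᵥ B s = 0
  orth_NB : ∀ s, N s ⬝ᵥ B s = 0
  B_eq : ∀ s, B s = cross3 (T s) (N s)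
  frenet_T : ∀ s, deriv T s = kappa s • N s
  frenet_N : ∀ s, deriv N s = (-(kappa s)) • T s + tau s • B s
  frenet_B : ∀ s, deriv B s = (-(tau s)) • N s
  frenet_Tstar : ∀ s, deriv Tstar s = kappa s • Nstar s + kappaStar s • N s
  frenet_Nstar : ∀ s, deriv Nstar s =
    (-(kappa s)) • Tstar s + (-(kappaStar s)) • T s + tau s • Bstar s + tauStar s • B s
  frenet_Bstar : ∀ s, deriv Bstar s = (-(tau s)) • Nstar s + (-(tauStar s)) • N s

/-- Partial derivative of a parametrized surface with respect to the first parameter. -/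
noncomputable def phiS (φ : ℝ → ℝ → Fin 3 → ℝ) (s v : ℝ) : Fin 3 → ℝ :=
  deriv (fun t => φ t v) s

/-- Partial derivative with respect to the second parameter. -/
noncomputable def phiV (φ : ℝ → ℝ → Fin 3 → ℝ) (s v : ℝ) : Fin 3 → ℝ :=
  deriv (φ s) v

noncomputable def phiSS (φ : ℝ → ℝ → Fin 3 → ℝ) (s v : ℝ) : Fin 3 → ℝ :=
  deriv (fun t => phiS φ t v) s

noncomputable def phiSV (φ : ℝ → ℝ → Fin 3 → ℝ) (s v : ℝ) : Fin 3 → ℝ :=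
  deriv (fun w => phiS φ s w) v

noncomputable def phiVV (φ : ℝ → ℝ → Fin 3 → ℝ) (s v : ℝ) : Fin 3 → ℝ :=
  deriv (fun w => phiV φ s w) v

/-- `(s, v)` is a regular point of `φ` if `φ_s × φ_v ≠ 0` there. -/
def IsRegularPoint (φ : ℝ → ℝ → Fin 3 → ℝ) (s v : ℝ) : Prop :=
  cross3 (phiS φ s v) (phiV φ s v) ≠ 0

/-- The unit normal `n = (φ_v × φ_s) / ‖φ_v × φ_s‖`. -/
noncomputable def unitNormal (φ : ℝ → ℝ → Fin 3 → ℝ) (s v : ℝ) : Fin 3 → ℝ :=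
  (enorm3 (cross3 (phiV φ s v) (phiS φ s v)))⁻¹ • cross3 (phiV φ s v) (phiS φ s v)

/-- Gaussian curvature `K = (eg − f²)/(EG − F²)`. -/
noncomputable def GaussK (φ : ℝ → ℝ → Fin 3 → ℝ) (s v : ℝ) : ℝ :=
  (phiSS φ s v ⬝ᵥ unitNormal φ s v * (phiVV φ s v ⬝ᵥ unitNormal φ s v) -
      (phiSV φ s v ⬝ᵥ unitNormal φ s v) ^ 2) /
    (phiS φ s v ⬝ᵥ phiS φ s v * (phiV φ s v ⬝ᵥ phiV φ s v) -
      (phiS φ s v ⬝ᵥ phiV φ s v) ^ 2)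

/-- Mean curvature (trace of the shape operator) `H = (eG − 2fF + gE)/(EG − F²)`. -/
noncomputable def MeanH (φ : ℝ → ℝ → Fin 3 → ℝ) (s v : ℝ) : ℝ :=
  (phiSS φ s v ⬝ᵥ unitNormal φ s v * (phiV φ s v ⬝ᵥ phiV φ s v) -
      2 * (phiSV φ s v ⬝ᵥ unitNormal φ s v) * (phiS φ s v ⬝ᵥ phiV φ s v) +
      phiVV φ s v ⬝ᵥ unitNormal φ s v * (phiS φ s v ⬝ᵥ phiS φ s v)) /
    (phiS φ s v ⬝ᵥ phiS φ s v * (phiV φ s v ⬝ᵥ phiV φ s v) -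
      (phiS φ s v ⬝ᵥ phiV φ s v) ^ 2)

/-- The ruled surface `φ_X(s,v) = X(s) × X*(s) + v·X(s)`. -/
noncomputable def ruled (X Xstar : ℝ → Fin 3 → ℝ) : ℝ → ℝ → Fin 3 → ℝ :=
  fun s v => cross3 (X s) (Xstar s) + v • X s

section Helpers

lemma cross3_0 (a b : Fin 3 → ℝ) : cross3 a b 0 = a 1 * b 2 - a 2 * b 1 := by
  simp [cross3, cross_apply]
lemma cross3_1 (a b : Fin 3 → ℝ) : cross3 a b 1 = a 2 * b 0 - a 0 * b 2 := by
  simp [cross3, cross_apply]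
lemma cross3_2 (a b : Fin 3 → ℝ) : cross3 a b 2 = a 0 * b 1 - a 1 * b 0 := by
  simp [cross3, cross_apply]
lemma dot3 (a b : Fin 3 → ℝ) : a ⬝ᵥ b = a 0 * b 0 + a 1 * b 1 + a 2 * b 2 := by
  simp [dotProduct, Fin.sum_univ_three]

lemma triple3 (u x y : Fin 3 → ℝ) :
    cross3 u (cross3 x y) = (u ⬝ᵥ y) • x - (u ⬝ᵥ x) • y := by
  funext i; fin_cases i <;>
    simp [cross3_0, cross3_1, cross3_2, dot3, Pi.sub_apply, Pi.smul_apply, smul_eq_mul] <;> ring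

lemma triple3' (x y u : Fin 3 → ℝ) :
    cross3 (cross3 x y) u = (u ⬝ᵥ x) • y - (u ⬝ᵥ y) • x := by
  funext i; fin_cases i <;>
    simp [cross3_0, cross3_1, cross3_2, dot3, Pi.sub_apply, Pi.smul_apply, smul_eq_mul] <;> ring

lemma cross3_add_right (u x y : Fin 3 → ℝ) : cross3 u (x + y) = cross3 u x + cross3 u y := by
  funext i; fin_cases i <;> simp [cross3_0, cross3_1, cross3_2] <;> ring
lemma cross3_smul_right (c : ℝ) (u x : Fin 3 → ℝ) : cross3 u (c • x) = c • cross3 u x := by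
  funext i; fin_cases i <;> simp [cross3_0, cross3_1, cross3_2, smul_eq_mul] <;> ring
lemma cross3_add_left (u x y : Fin 3 → ℝ) : cross3 (u + x) y = cross3 u y + cross3 x y := by
  funext i; fin_cases i <;> simp [cross3_0, cross3_1, cross3_2] <;> ring
lemma cross3_smul_left (c : ℝ) (u x : Fin 3 → ℝ) : cross3 (c • u) x = c • cross3 u x := by
  funext i; fin_cases i <;> simp [cross3_0, cross3_1, cross3_2, smul_eq_mul] <;> ring
lemma cross3_self (u : Fin 3 → ℝ) : cross3 u u = 0 := by
  funext i; fin_cases i <;> simp [cross3_0, cross3_1, cross3_2] <;> ring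
lemma cross3_anticomm (a b : Fin 3 → ℝ) : cross3 a b = -cross3 b a := by
  funext i; fin_cases i <;> simp [cross3_0, cross3_1, cross3_2] <;> ring

lemma hasDerivAt_cross3 {f g : ℝ → Fin 3 → ℝ} {f' g' : Fin 3 → ℝ} {x : ℝ}
    (hf : HasDerivAt f f' x) (hg : HasDerivAt g g' x) :
    HasDerivAt (fun t => cross3 (f t) (g t)) (cross3 f' (g x) + cross3 (f x) g') x := by
  have hfi : ∀ i, HasDerivAt (fun t => f t i) (f' i) x := fun i => hasDerivAt_pi.mp hf i
  have hgi : ∀ i, HasDerivAt (fun t => g t i) (g' i) x := fun i => hasDerivAt_pi.mp hg i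
  rw [hasDerivAt_pi]
  intro i
  fin_cases i
  · convert ((hfi 1).fun_mul (hgi 2)).fun_sub ((hfi 2).fun_mul (hgi 1)) using 1
    show cross3 f' (g x) 0 + cross3 (f x) g' 0 = _
    rw [cross3_0, cross3_0]; ring
    funext t; exact cross3_0 _ _
  · convert ((hfi 2).fun_mul (hgi 0)).fun_sub ((hfi 0).fun_mul (hgi 2)) using 1
    show cross3 f' (g x) 1 + cross3 (f x) g' 1 = _
    rw [cross3_1, cross3_1]; ring
    funext t; exact cross3_1 _ _
  · convert ((hfi 0).fun_mul (hgi 1)).fun_sub ((hfi 1).fun_mul (hgi 0)) using 1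
    show cross3 f' (g x) 2 + cross3 (f x) g' 2 = _
    rw [cross3_2, cross3_2]; ring
    funext t; exact cross3_2 _ _

lemma hasDerivAt_dot3 {f g : ℝ → Fin 3 → ℝ} {f' g' : Fin 3 → ℝ} {x : ℝ}
    (hf : HasDerivAt f f' x) (hg : HasDerivAt g g' x) :
    HasDerivAt (fun t => f t ⬝ᵥ g t) (f' ⬝ᵥ g x + f x ⬝ᵥ g') x := by
  have hfi : ∀ i, HasDerivAt (fun t => f t i) (f' i) x := fun i => hasDerivAt_pi.mp hf i
  have hgi : ∀ i, HasDerivAt (fun t => g t i) (g' i) x := fun i => hasDerivAt_pi.mp hg i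
  have h := (((hfi 0).fun_mul (hgi 0)).fun_add ((hfi 1).fun_mul (hgi 1))).fun_add ((hfi 2).fun_mul (hgi 2))
  have e : (fun t => f t ⬝ᵥ g t) = fun t => f t 0 * g t 0 + f t 1 * g t 1 + f t 2 * g t 2 := by
    funext t; rw [dot3]
  rw [e, dot3, dot3]
  exact h.congr_deriv (by ring)

lemma frame_dot (F : DualFrenetApparatus) (s : ℝ) (x1 x2 x3 y1 y2 y3 : ℝ) :
    (x1 • F.T s + x2 • F.N s + x3 • F.B s) ⬝ᵥ (y1 • F.T s + y2 • F.N s + y3 • F.B s)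
      = x1 * y1 + x2 * y2 + x3 * y3 := by
  have h4' : F.N s ⬝ᵥ F.T s = 0 := by rw [dotProduct_comm]; exact F.orth_TN s
  have h5' : F.B s ⬝ᵥ F.T s = 0 := by rw [dotProduct_comm]; exact F.orth_TB s
  have h6' : F.B s ⬝ᵥ F.N s = 0 := by rw [dotProduct_comm]; exact F.orth_NB s
  simp only [add_dotProduct, dotProduct_add, smul_dotProduct, dotProduct_smul,
    F.unit_T s, F.unit_N s, F.unit_B s, F.orth_TN s, F.orth_TB s, F.orth_NB s,
    h4', h5', h6', smul_eq_mul]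
  ring

lemma combo_eq_zero (F : DualFrenetApparatus) (s : ℝ) {x1 x2 x3 : ℝ}
    (h : x1 • F.T s + x2 • F.N s + x3 • F.B s = 0) : x1 = 0 ∧ x2 = 0 ∧ x3 = 0 := by
  refine ⟨?_, ?_, ?_⟩
  · have h1 := congrArg (fun w => w ⬝ᵥ ((1:ℝ) • F.T s + (0:ℝ) • F.N s + (0:ℝ) • F.B s)) h
    simp only [frame_dot, zero_dotProduct] at h1
    linarith
  · have h1 := congrArg (fun w => w ⬝ᵥ ((0:ℝ) • F.T s + (1:ℝ) • F.N s + (0:ℝ) • F.B s)) h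
    simp only [frame_dot, zero_dotProduct] at h1
    linarith
  · have h1 := congrArg (fun w => w ⬝ᵥ ((0:ℝ) • F.T s + (0:ℝ) • F.N s + (1:ℝ) • F.B s)) h
    simp only [frame_dot, zero_dotProduct] at h1
    linarith

end Helpers

/-- **Theorem 3.** Suppose `κ* ≠ 0` and `τ ≠ 0` everywhere. The ruled surface associated
to the dual binormal indicatrix has vanishing Gaussian and mean curvature at every regular
point (hence is a developable — thus Weingarten — and minimal surface) if and only if
`κ ≡ 0` and `τ* ≡ 0`. -/
theorem weingarten_minimal_binormal_indicatrix (F : DualFrenetApparatus)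
    (βN βB : ℝ → Fin 3 → ℝ)
    (hβN : ContDiff ℝ (⊤ : ℕ∞) βN) (hβB : ContDiff ℝ (⊤ : ℕ∞) βB)
    (hNstar : ∀ s, F.Nstar s = cross3 (βN s) (F.N s))
    (hBstar : ∀ s, F.Bstar s = cross3 (βB s) (F.B s))
    (hkappaStar : ∀ s, F.kappaStar s ≠ 0) (htau : ∀ s, F.tau s ≠ 0) :
    (∀ s v : ℝ, IsRegularPoint (ruled F.B F.Bstar) s v →
        GaussK (ruled F.B F.Bstar) s v = 0 ∧ MeanH (ruled F.B F.Bstar) s v = 0) ↔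
      (∀ s, F.kappa s = 0) ∧ (∀ s, F.tauStar s = 0) := by
  -- derivative facts
  have hdB : ∀ t, HasDerivAt F.B ((-(F.tau t)) • F.N t) t := fun t => by
    have h := ((F.smooth_B.differentiable (by simp)) t).hasDerivAt
    rwa [F.frenet_B t] at h
  have hdN : ∀ t, HasDerivAt F.N ((-(F.kappa t)) • F.T t + F.tau t • F.B t) t := fun t => by
    have h := ((F.smooth_N.differentiable (by simp)) t).hasDerivAt
    rwa [F.frenet_N t] at h
  have hdBst : ∀ t, HasDerivAt F.Bstar
      ((-(F.tau t)) • F.Nstar t + (-(F.tauStar t)) • F.N t) t := fun t => by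
    have h := ((F.smooth_Bstar.differentiable (by simp)) t).hasDerivAt
    rwa [F.frenet_Bstar t] at h
  have hdβN : ∀ t, HasDerivAt βN (deriv βN t) t :=
    fun t => ((hβN.differentiable (by simp)) t).hasDerivAt
  have hdβB : ∀ t, HasDerivAt βB (deriv βB t) t :=
    fun t => ((hβB.differentiable (by simp)) t).hasDerivAt
  have hdtau : ∀ t, HasDerivAt F.tau (deriv F.tau t) t :=
    fun t => ((F.smooth_tau.differentiable (by simp)) t).hasDerivAt
  -- frame cross identities
  have hXBN : ∀ t, cross3 (F.B t) (F.N t) = -F.T t := fun t => by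
    have h : F.N t ⬝ᵥ F.T t = 0 := by rw [dotProduct_comm]; exact F.orth_TN t
    rw [F.B_eq t, triple3', h, F.unit_N t]; simp
  have hXBT : ∀ t, cross3 (F.B t) (F.T t) = F.N t := fun t => by
    rw [F.B_eq t, triple3', F.unit_T t, F.orth_TN t]; simp
  have hXTB : ∀ t, cross3 (F.T t) (F.B t) = -F.N t := fun t => by
    rw [cross3_anticomm, hXBT t]
  have hXNB : ∀ t, cross3 (F.N t) (F.B t) = F.T t := fun t => by
    rw [cross3_anticomm, hXBN t]; simp
  have hXNBst : ∀ t, cross3 (F.N t) (F.Bstar t) = (-(βB t ⬝ᵥ F.N t)) • F.B t := fun t => by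
    have h : F.N t ⬝ᵥ βB t = βB t ⬝ᵥ F.N t := dotProduct_comm _ _
    rw [hBstar t, triple3, F.orth_NB t, h]
    simp only [zero_smul, zero_sub, neg_smul]
  have hXBNst : ∀ t, cross3 (F.B t) (F.Nstar t) = (-(βN t ⬝ᵥ F.B t)) • F.N t := fun t => by
    have h1 : F.B t ⬝ᵥ F.N t = 0 := by rw [dotProduct_comm]; exact F.orth_NB t
    have h2 : F.B t ⬝ᵥ βN t = βN t ⬝ᵥ F.B t := dotProduct_comm _ _
    rw [hNstar t, triple3, h1, h2]
    simp only [zero_smul, zero_sub, neg_smul]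
  set φ := ruled F.B F.Bstar with hφ
  -- first partial derivatives
  have hphiS : ∀ s v, phiS φ s v
      = F.tauStar s • F.T s + (F.tau s * ((βN s ⬝ᵥ F.B s) - v)) • F.N s
        + (F.tau s * (βB s ⬝ᵥ F.N s)) • F.B s := by
    intro s v
    have hd : HasDerivAt (fun t => cross3 (F.B t) (F.Bstar t) + v • F.B t)
        ((cross3 ((-(F.tau s)) • F.N s) (F.Bstar s)
          + cross3 (F.B s) ((-(F.tau s)) • F.Nstar s + (-(F.tauStar s)) • F.N s))
          + v • ((-(F.tau s)) • F.N s)) s :=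
      (hasDerivAt_cross3 (hdB s) (hdBst s)).add (HasDerivAt.const_smul v (hdB s))
    have e2 : phiS φ s v
        = deriv (fun t => cross3 (F.B t) (F.Bstar t) + v • F.B t) s := by
      simp only [phiS, hφ, ruled]
    rw [e2, hd.deriv, cross3_smul_left, cross3_add_right, cross3_smul_right,
      cross3_smul_right, hXNBst s, hXBNst s, hXBN s]
    module
  have hphiV : ∀ s v, phiV φ s v = F.B s := by
    intro s v
    have hd : HasDerivAt (fun w : ℝ => cross3 (F.B s) (F.Bstar s) + w • F.B s) (F.B s) v := by
      simpa using ((hasDerivAt_id v).smul_const (F.B s)).const_add (cross3 (F.B s) (F.Bstar s))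
    have e2 : phiV φ s v
        = deriv (fun w : ℝ => cross3 (F.B s) (F.Bstar s) + w • F.B s) v := rfl
    rw [e2, hd.deriv]
  -- second partial derivatives
  have hphiVV : ∀ s v, phiVV φ s v = 0 := by
    intro s v
    have h : (fun w => phiV φ s w) = fun _ => F.B s := funext fun w => hphiV s w
    simp [phiVV, h]
  have hphiSV : ∀ s v, phiSV φ s v = (-(F.tau s)) • F.N s := by
    intro s v
    have heq : (fun w => phiS φ s w)
        = fun w : ℝ => (F.tauStar s • F.T s + (F.tau s * (βN s ⬝ᵥ F.B s)) • F.N s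
            + (F.tau s * (βB s ⬝ᵥ F.N s)) • F.B s) + w • ((-(F.tau s)) • F.N s) := by
      funext w; rw [hphiS s w]; module
    have hd : HasDerivAt (fun w : ℝ => (F.tauStar s • F.T s
          + (F.tau s * (βN s ⬝ᵥ F.B s)) • F.N s
          + (F.tau s * (βB s ⬝ᵥ F.N s)) • F.B s) + w • ((-(F.tau s)) • F.N s))
        ((-(F.tau s)) • F.N s) v := by
      simpa using ((hasDerivAt_id v).smul_const ((-(F.tau s)) • F.N s)).const_add
        (F.tauStar s • F.T s + (F.tau s * (βN s ⬝ᵥ F.B s)) • F.N s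
          + (F.tau s * (βB s ⬝ᵥ F.N s)) • F.B s)
    simp only [phiSV]
    rw [heq, hd.deriv]
  -- combo forms
  have hVcombo : ∀ s v, phiV φ s v
      = (0:ℝ) • F.T s + (0:ℝ) • F.N s + (1:ℝ) • F.B s := by
    intro s v; rw [hphiV]; module
  have hSVcombo : ∀ s v, phiSV φ s v
      = (0:ℝ) • F.T s + (-(F.tau s)) • F.N s + (0:ℝ) • F.B s := by
    intro s v; rw [hphiSV]; module
  -- cross products of the partials
  have hcrossVS : ∀ s v, cross3 (phiV φ s v) (phiS φ s v)
      = (-(F.tau s * ((βN s ⬝ᵥ F.B s) - v))) • F.T s + F.tauStar s • F.N s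
        + (0:ℝ) • F.B s := by
    intro s v
    rw [hphiV s v, hphiS s v, cross3_add_right, cross3_add_right, cross3_smul_right,
      cross3_smul_right, cross3_smul_right, hXBT s, hXBN s, cross3_self]
    module
  have hcrossSV : ∀ s v, cross3 (phiS φ s v) (phiV φ s v)
      = (F.tau s * ((βN s ⬝ᵥ F.B s) - v)) • F.T s + (-(F.tauStar s)) • F.N s
        + (0:ℝ) • F.B s := by
    intro s v
    rw [hphiV s v, hphiS s v, cross3_add_left, cross3_add_left, cross3_smul_left,
      cross3_smul_left, cross3_smul_left, hXTB s, hXNB s, cross3_self]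
    module
  have henorm : ∀ s v, enorm3 (cross3 (phiV φ s v) (phiS φ s v))
      = Real.sqrt ((F.tau s * ((βN s ⬝ᵥ F.B s) - v))^2 + (F.tauStar s)^2) := by
    intro s v
    rw [enorm3, hcrossVS s v, frame_dot]
    congr 1; ring
  have hUN : ∀ s v, unitNormal φ s v
      = (Real.sqrt ((F.tau s * ((βN s ⬝ᵥ F.B s) - v))^2 + (F.tauStar s)^2))⁻¹
        • ((-(F.tau s * ((βN s ⬝ᵥ F.B s) - v))) • F.T s + F.tauStar s • F.N s
          + (0:ℝ) • F.B s) := by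
    intro s v
    rw [unitNormal, henorm s v, hcrossVS s v]
  -- second fundamental form entries
  have hfval : ∀ s v, phiSV φ s v ⬝ᵥ unitNormal φ s v
      = (Real.sqrt ((F.tau s * ((βN s ⬝ᵥ F.B s) - v))^2 + (F.tauStar s)^2))⁻¹
        * (-(F.tau s) * F.tauStar s) := by
    intro s v
    rw [hUN s v, dotProduct_smul, hSVcombo s v, frame_dot]
    simp [smul_eq_mul]
    try ring
  have hgval : ∀ s v, phiVV φ s v ⬝ᵥ unitNormal φ s v = 0 := by
    intro s v; rw [hphiVV s v]; simp
  -- first fundamental form entries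
  have hEval : ∀ s v, phiS φ s v ⬝ᵥ phiS φ s v
      = (F.tauStar s)^2 + (F.tau s * ((βN s ⬝ᵥ F.B s) - v))^2
        + (F.tau s * (βB s ⬝ᵥ F.N s))^2 := by
    intro s v; rw [hphiS s v, frame_dot]; ring
  have hFval : ∀ s v, phiS φ s v ⬝ᵥ phiV φ s v = F.tau s * (βB s ⬝ᵥ F.N s) := by
    intro s v
    rw [hphiS s v, hVcombo s v, frame_dot]; ring
  have hGval : ∀ s v, phiV φ s v ⬝ᵥ phiV φ s v = 1 := by
    intro s v; rw [hphiV s v]; exact F.unit_B s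
  have hden : ∀ s v, phiS φ s v ⬝ᵥ phiS φ s v * (phiV φ s v ⬝ᵥ phiV φ s v)
        - (phiS φ s v ⬝ᵥ phiV φ s v)^2
      = (F.tau s * ((βN s ⬝ᵥ F.B s) - v))^2 + (F.tauStar s)^2 := by
    intro s v; rw [hEval s v, hFval s v, hGval s v]; ring
  -- φ_ss ⬝ T under τ* ≡ 0
  have hSST : (∀ t, F.tauStar t = 0) → ∀ s v,
      phiSS φ s v ⬝ᵥ F.T s = -(F.tau s * ((βN s ⬝ᵥ F.B s) - v)) * F.kappa s := by
    intro h0 s v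
    have heq : (fun t => phiS φ t v)
        = fun t => (F.tau t * ((βN t ⬝ᵥ F.B t) - v)) • F.N t
            + (F.tau t * (βB t ⬝ᵥ F.N t)) • F.B t := by
      funext t; rw [hphiS t v, h0 t]; module
    have hP : HasDerivAt (fun t => F.tau t * ((βN t ⬝ᵥ F.B t) - v))
        (deriv F.tau s * ((βN s ⬝ᵥ F.B s) - v)
          + F.tau s * (deriv βN s ⬝ᵥ F.B s + βN s ⬝ᵥ ((-(F.tau s)) • F.N s))) s := by
      have := (hdtau s).fun_mul ((hasDerivAt_dot3 (hdβN s) (hdB s)).sub_const v)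
      convert this using 1
      try ring
    have hQ : HasDerivAt (fun t => F.tau t * (βB t ⬝ᵥ F.N t))
        (deriv F.tau s * (βB s ⬝ᵥ F.N s)
          + F.tau s * (deriv βB s ⬝ᵥ F.N s
            + βB s ⬝ᵥ ((-(F.kappa s)) • F.T s + F.tau s • F.B s))) s := by
      have := (hdtau s).fun_mul (hasDerivAt_dot3 (hdβB s) (hdN s))
      convert this using 1
      try ring
    have hd := (hP.fun_smul (hdN s)).fun_add (hQ.fun_smul (hdB s))
    have e2 : phiSS φ s v
        = deriv (fun t => (F.tau t * ((βN t ⬝ᵥ F.B t) - v)) • F.N t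
            + (F.tau t * (βB t ⬝ᵥ F.N t)) • F.B t) s := by
      simp only [phiSS]; rw [heq]
    rw [e2, hd.deriv]
    have hNT : F.N s ⬝ᵥ F.T s = 0 := by rw [dotProduct_comm]; exact F.orth_TN s
    have hBT : F.B s ⬝ᵥ F.T s = 0 := by rw [dotProduct_comm]; exact F.orth_TB s
    simp only [add_dotProduct, smul_dotProduct, smul_eq_mul, hNT, hBT, F.unit_T s]
    ring
  -- e-entry under τ* ≡ 0
  have heval : (∀ t, F.tauStar t = 0) → ∀ s v,
      phiSS φ s v ⬝ᵥ unitNormal φ s v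
      = (Real.sqrt ((F.tau s * ((βN s ⬝ᵥ F.B s) - v))^2 + (F.tauStar s)^2))⁻¹
        * ((F.tau s * ((βN s ⬝ᵥ F.B s) - v))^2 * F.kappa s) := by
    intro h0 s v
    rw [hUN s v, dotProduct_smul]
    have hdot : phiSS φ s v ⬝ᵥ ((-(F.tau s * ((βN s ⬝ᵥ F.B s) - v))) • F.T s
          + F.tauStar s • F.N s + (0:ℝ) • F.B s)
        = (-(F.tau s * ((βN s ⬝ᵥ F.B s) - v))) * (phiSS φ s v ⬝ᵥ F.T s) := by
      rw [h0 s]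
      simp [dotProduct_add, dotProduct_smul]
    rw [hdot, hSST h0 s v]
    simp only [smul_eq_mul]
    try ring
  constructor
  · intro h
    have hts : ∀ s, F.tauStar s = 0 := by
      intro s
      by_contra hne
      have hreg : IsRegularPoint φ s (βN s ⬝ᵥ F.B s) := by
        unfold IsRegularPoint
        intro hz
        rw [hcrossSV s _] at hz
        have h2 := (combo_eq_zero F s hz).2.1
        exact hne (by linarith)
      have hK := (h s _ hreg).1
      simp only [GaussK] at hK
      rw [hden s _, hgval s _, hfval s _] at hK
      rcases div_eq_zero_iff.mp hK with h1 | h1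
      · have hwpos : 0 < Real.sqrt ((F.tau s * ((βN s ⬝ᵥ F.B s) - (βN s ⬝ᵥ F.B s)))^2
            + (F.tauStar s)^2) := by
          apply Real.sqrt_pos.mpr
          have h2 : 0 < (F.tauStar s)^2 :=
            lt_of_le_of_ne (sq_nonneg _) (Ne.symm (pow_ne_zero 2 hne))
          nlinarith [sq_nonneg (F.tau s * ((βN s ⬝ᵥ F.B s) - (βN s ⬝ᵥ F.B s)))]
        have hf0 : (Real.sqrt ((F.tau s * ((βN s ⬝ᵥ F.B s) - (βN s ⬝ᵥ F.B s)))^2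
            + (F.tauStar s)^2))⁻¹ * (-(F.tau s) * F.tauStar s) ≠ 0 :=
          mul_ne_zero (inv_ne_zero hwpos.ne')
            (mul_ne_zero (neg_ne_zero.mpr (htau s)) hne)
        have hsq : ((Real.sqrt ((F.tau s * ((βN s ⬝ᵥ F.B s) - (βN s ⬝ᵥ F.B s)))^2
            + (F.tauStar s)^2))⁻¹ * (-(F.tau s) * F.tauStar s))^2 = 0 := by linarith
        exact hf0 (sq_eq_zero_iff.mp hsq)
      · have h2 : 0 < (F.tauStar s)^2 :=
          lt_of_le_of_ne (sq_nonneg _) (Ne.symm (pow_ne_zero 2 hne))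
        nlinarith [sq_nonneg (F.tau s * ((βN s ⬝ᵥ F.B s) - (βN s ⬝ᵥ F.B s)))]
    have hkap : ∀ s, F.kappa s = 0 := by
      intro s
      have hreg : IsRegularPoint φ s ((βN s ⬝ᵥ F.B s) + 1) := by
        unfold IsRegularPoint
        intro hz
        rw [hcrossSV s _] at hz
        have h2 := (combo_eq_zero F s hz).1
        have h3 : (βN s ⬝ᵥ F.B s) - ((βN s ⬝ᵥ F.B s) + 1) = -1 := by ring
        rw [h3] at h2
        exact htau s (by linarith)
      have hH := (h s _ hreg).2
      simp only [MeanH] at hH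
      rw [hden s _, hgval s _, hfval s _, hGval s _, heval hts s _, hts s] at hH
      have h3 : (βN s ⬝ᵥ F.B s) - ((βN s ⬝ᵥ F.B s) + 1) = -1 := by ring
      rw [h3] at hH
      have hwpos : 0 < Real.sqrt ((F.tau s * (-1))^2 + (0:ℝ)^2) := by
        apply Real.sqrt_pos.mpr
        have h2 : 0 < (F.tau s)^2 :=
          lt_of_le_of_ne (sq_nonneg _) (Ne.symm (pow_ne_zero 2 (htau s)))
        nlinarith
      have hτ2 : (F.tau s * (-1))^2 + (0:ℝ)^2 ≠ 0 := by
        have h2 : 0 < (F.tau s)^2 :=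
          lt_of_le_of_ne (sq_nonneg _) (Ne.symm (pow_ne_zero 2 (htau s)))
        nlinarith
      rcases div_eq_zero_iff.mp hH with h1 | h1
      · have h4 : (Real.sqrt ((F.tau s * (-1))^2 + (0:ℝ)^2))⁻¹
            * ((F.tau s * (-1))^2 * F.kappa s) = 0 := by linarith [h1]
        rcases mul_eq_zero.mp h4 with h5 | h5
        · exact absurd h5 (inv_ne_zero hwpos.ne')
        · rcases mul_eq_zero.mp h5 with h6 | h6
          · exact absurd h6 (by
              have h2 : 0 < (F.tau s)^2 :=
                lt_of_le_of_ne (sq_nonneg _) (Ne.symm (pow_ne_zero 2 (htau s)))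
              nlinarith)
          · exact h6
      · exact absurd h1 hτ2
    exact ⟨hkap, hts⟩
  · rintro ⟨hkap, hts⟩ s v _
    constructor
    · simp only [GaussK]
      rw [hgval s v, hfval s v, hts s]
      simp
    · simp only [MeanH]
      rw [hden s v, hgval s v, hfval s v, hGval s v, heval hts s v, hts s, hkap s]
      simp

end
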